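/- arXiv:1806.06838 — 2 statements merged into one kernel-verified Lean document; each statement's English description precedes it below -/
import Mathlib

section
/- Let G be primitive graph (connected with an odd cycle), and let i,j be vertices of G. If there exist walks from i to j of lengths k₁ and k₂ with k₁ + k₂ odd, then exp(G:i,j) ≤ max{k₁,k₂} − 1. -/
def IsPrimitive {n : ℕ} (A : Matrix (Fin n) (Fin n) ℝ) : Prop :=
  (∀ i j, 0 ≤ A i j) ∧ ∃ k : ℕ, 0 < k ∧ ∀ i j, 0 < (A ^ k) i j

lemma pow_entry_nonneg {n : ℕ} {A : Matrix (Fin n) (Fin n) ℝ}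
    (h : ∀ i j, 0 ≤ A i j) : ∀ m i j, 0 ≤ (A ^ m) i j := by
  intro m
  induction m with
  | zero => intro i j; by_cases hij : i = j <;> simp [Matrix.one_apply, hij]
  | succ m ih =>
    intro i j
    rw [pow_succ, Matrix.mul_apply]
    exact Finset.sum_nonneg fun a _ => mul_nonneg (ih i a) (h a j)

lemma sq_diag_pos {n : ℕ} {A : Matrix (Fin n) (Fin n) ℝ} (hsymm : A.IsSymm)
    (hA : IsPrimitive A) (i : Fin n) : 0 < (A ^ 2) i i := by
  obtain ⟨hnn, k, hk, hpos⟩ := hA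
  have h1 : 0 < (A ^ k) i i := hpos i i
  rw [← Nat.succ_pred_eq_of_pos hk, pow_succ', Matrix.mul_apply] at h1
  obtain ⟨a, ha⟩ := Finset.exists_lt_of_sum_lt (f := fun _ => (0 : ℝ)) (by simpa using h1)
  have h2 : 0 < A i a := by
    rcases lt_or_eq_of_le (hnn i a) with h | h
    · exact h
    · exfalso; rw [← h] at ha; simp at ha
  have hsym : A a i = A i a := hsymm.apply i a
  calc (0 : ℝ) < A i a * A a i := by rw [hsym]; positivity
    _ ≤ ∑ b, A i b * A b i :=
        Finset.single_le_sum (fun b _ => mul_nonneg (hnn i b) (hnn b i)) (Finset.mem_univ a)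
    _ = (A ^ 2) i i := by rw [pow_two, Matrix.mul_apply]

lemma pow_step {n : ℕ} {A : Matrix (Fin n) (Fin n) ℝ} (hsymm : A.IsSymm)
    (hA : IsPrimitive A) {i j : Fin n} {k : ℕ} (h : 0 < (A ^ k) i j) :
    ∀ m, 0 < (A ^ (k + 2 * m)) i j := by
  have hnn := hA.1
  intro m
  induction m with
  | zero => simpa using h
  | succ m ih =>
    have heq : k + 2 * (m + 1) = 2 + (k + 2 * m) := by ring
    rw [heq, pow_add, Matrix.mul_apply]
    calc (0 : ℝ) < (A ^ 2) i i * (A ^ (k + 2 * m)) i j :=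
          mul_pos (sq_diag_pos hsymm hA i) ih
      _ ≤ ∑ a, (A ^ 2) i a * (A ^ (k + 2 * m)) a j :=
          Finset.single_le_sum
            (fun a _ => mul_nonneg (pow_entry_nonneg hnn 2 i a)
              (pow_entry_nonneg hnn _ a j)) (Finset.mem_univ i)

/-- If in a primitive graph there are walks from `i` to `j` of lengths `k₁` and
`k₂` with `k₁ + k₂` odd, then there is a walk from `i` to `j` of every length
`ℓ ≥ max k₁ k₂ - 1`; i.e. `exp(G : i, j) ≤ max k₁ k₂ - 1`. -/
theorem localExp_le_of_two_walks {n : ℕ} (A : Matrix (Fin n) (Fin n) ℝ)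
    (hsymm : A.IsSymm) (hA : IsPrimitive A) (i j : Fin n) (k₁ k₂ : ℕ)
    (h₁ : 0 < (A ^ k₁) i j) (h₂ : 0 < (A ^ k₂) i j) (hodd : Odd (k₁ + k₂)) :
    ∀ ℓ : ℕ, max k₁ k₂ - 1 ≤ ℓ → 0 < (A ^ ℓ) i j := by
  intro ℓ hℓ
  obtain ⟨t, ht⟩ := hodd
  -- k₁ ≠ k₂ since k₁ + k₂ is odd
  rcases Nat.lt_or_ge ℓ (max k₁ k₂) with hlt | hge
  · -- ℓ = max k₁ k₂ - 1, which equals min k₁ k₂ + 2*m for some m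
    have hmin : min k₁ k₂ ≤ ℓ ∧ (ℓ - min k₁ k₂) % 2 = 0 := by
      rcases le_total k₁ k₂ with h | h <;> constructor <;> omega
    obtain ⟨hle, hpar⟩ := hmin
    have : ℓ = min k₁ k₂ + 2 * ((ℓ - min k₁ k₂) / 2) := by omega
    rw [this]
    rcases le_total k₁ k₂ with h | h
    · rw [min_eq_left h]; exact pow_step hsymm hA h₁ _
    · rw [min_eq_right h]; exact pow_step hsymm hA h₂ _
  · -- ℓ ≥ max k₁ k₂ : use whichever of k₁, k₂ has the same parity as ℓ
    rcases Nat.even_or_odd (ℓ - k₁) with he | ho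
    · have : ℓ = k₁ + 2 * ((ℓ - k₁) / 2) := by
        obtain ⟨s, hs⟩ := he; omega
      rw [this]; exact pow_step hsymm hA h₁ _
    · have : ℓ = k₂ + 2 * ((ℓ - k₂) / 2) := by
        obtain ⟨s, hs⟩ := ho; omega
      rw [this]; exact pow_step hsymm hA h₂ _
end

section
/- For n ≥ 4, the number of primitive matrices in C_n^{0,0} equals 2^{n−2} − 2^{⌊(n−1)/2⌋}. -/
def ExpIs {n : ℕ} (A : Matrix (Fin n) (Fin n) ℝ) (e : ℕ) : Prop :=
  IsLeast {k : ℕ | 0 < k ∧ ∀ i j, 0 < (A ^ k) i j} e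

/-- A `(0,1)` companion matrix: superdiagonal entries `1` and all other entries
`0` in the first `n-1` rows; last-row entries in `{0,1}`. -/
def IsCompanion {n : ℕ} (C : Matrix (Fin n) (Fin n) ℝ) : Prop :=
  ∀ i j : Fin n,
    if (i : ℕ) + 1 < n then (C i j = if (j : ℕ) = (i : ℕ) + 1 then 1 else 0)
    else (C i j = 0 ∨ C i j = 1)

/-- The set `C_n^{α,ε}` of symmetric companion matrices `C + Cᵀ` with
`c_{n,1} = α` and `c_{n,n} = ε`. -/
def companionClass (n : ℕ) (hn : 0 < n) (α ε : ℝ) :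
    Set (Matrix (Fin n) (Fin n) ℝ) :=
  {A | ∃ C : Matrix (Fin n) (Fin n) ℝ, IsCompanion C ∧
    C ⟨n - 1, by omega⟩ ⟨0, hn⟩ = α ∧ C ⟨n - 1, by omega⟩ ⟨n - 1, by omega⟩ = ε ∧
    A = C + C.transpose}

/-- `mRun S` : the maximum length of a run of consecutive integers contained in
`S` (`0` for the empty set). -/
noncomputable def mRun (S : Set ℕ) : ℕ := sSup {L : ℕ | ∃ a : ℕ, ∀ t, t < L → a + t ∈ S}

/-- The exponent set of a family of matrices. -/
def expSet {n : ℕ} (X : Set (Matrix (Fin n) (Fin n) ℝ)) : Set ℕ :=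
  {e | ∃ A ∈ X, IsPrimitive A ∧ ExpIs A e}

open Finset
open scoped Matrix

namespace Matrix

variable {ι R : Type*} [Fintype ι] [DecidableEq ι]

theorem pow_add_apply_pos [Semiring R] [PartialOrder R] [IsStrictOrderedRing R]
    {A : Matrix ι ι R} (hA : ∀ i j, 0 ≤ A i j) {a b : ℕ} {i l j : ι}
    (ha : 0 < (A ^ a) i l) (hb : 0 < (A ^ b) l j) : 0 < (A ^ (a + b)) i j := by
  rw [pow_add, mul_apply]
  refine (mul_pos ha hb).trans_le <|
    single_le_sum (f := fun m => (A ^ a) i m * (A ^ b) m j) (fun m _ => ?_) (mem_univ l)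
  exact mul_nonneg (pow_apply_nonneg hA a i m) (pow_apply_nonneg hA b m j)

/-- Every step of a walk changes the colour `c`, so a walk of length `k` from `i` ends at a
vertex of colour `c i + k`. -/
theorem pow_apply_eq_zero_of_bipartite [Semiring R] {A : Matrix ι ι R} (c : ι → ZMod 2)
    (hA : ∀ i j, c i = c j → A i j = 0) (k : ℕ) (i j : ι) (hk : c j ≠ c i + k) :
    (A ^ k) i j = 0 := by
  induction k generalizing j with
  | zero => exact one_apply_ne (by rintro rfl; simp at hk)
  | succ k ih =>
    rw [pow_succ, mul_apply]
    refine sum_eq_zero fun l _ => ?_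
    by_cases hl : c l = c j
    · rw [hA l j hl, mul_zero]
    · have key : ∀ x y z : ZMod 2, x ≠ y → y ≠ z + 1 → x ≠ z := by decide
      push_cast [← add_assoc] at hk
      rw [ih l (key _ _ _ hl hk), zero_mul]

theorem exists_pow_apply_eq_zero_of_bipartite [Semiring R] {A : Matrix ι ι R}
    (c : ι → ZMod 2) (hA : ∀ i j, c i = c j → A i j = 0) {i₀ i₁ : ι} (hc : c i₀ ≠ c i₁)
    (k : ℕ) : ∃ i j, (A ^ k) i j = 0 := by
  by_cases h : c i₁ = c i₀ + k
  · exact ⟨i₀, i₀, pow_apply_eq_zero_of_bipartite c hA k i₀ i₀ (h ▸ hc)⟩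
  · exact ⟨i₀, i₁, pow_apply_eq_zero_of_bipartite c hA k i₀ i₁ h⟩

section PathSupport

variable [CommSemiring R] [PartialOrder R] [IsStrictOrderedRing R] {n : ℕ}
  {A : Matrix (Fin n) (Fin n) R} (hA : ∀ i j, 0 ≤ A i j) (hS : A.IsSymm)
  (hsucc : ∀ i j : Fin n, (j : ℕ) = i + 1 → 0 < A i j)
include hA hsucc

theorem pow_apply_pos_of_val_eq_add (d : ℕ) (i j : Fin n) (h : (j : ℕ) = i + d) :
    0 < (A ^ d) i j := by
  induction d generalizing j with
  | zero => simp [Fin.ext (h.trans (add_zero _)).symm]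
  | succ d ih =>
    let l : Fin n := ⟨i + d, by omega⟩
    exact pow_add_apply_pos hA (ih l rfl)
      (by rw [pow_one]; exact hsucc l j (by simp [l]; omega))

include hS

theorem pow_apply_pos_of_val_eq_add' (d : ℕ) (i j : Fin n) (h : (i : ℕ) = j + d) :
    0 < (A ^ d) i j := by
  rw [← (hS.pow d).apply]
  exact pow_apply_pos_of_val_eq_add hA hsucc d j i h

theorem pow_two_mul_apply_self_pos (hn : 2 ≤ n) (t : ℕ) (i : Fin n) :
    0 < (A ^ (2 * t)) i i := by
  have hsq : 0 < (A ^ 2) i i := by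
    by_cases hi : (i : ℕ) + 1 < n
    · exact pow_add_apply_pos hA (l := ⟨i + 1, hi⟩)
        (pow_apply_pos_of_val_eq_add hA hsucc 1 _ _ rfl)
        (pow_apply_pos_of_val_eq_add' hA hS hsucc 1 _ _ rfl)
    · exact pow_add_apply_pos hA (l := ⟨i - 1, by omega⟩)
        (pow_apply_pos_of_val_eq_add' hA hS hsucc 1 _ _ (by simp; omega))
        (pow_apply_pos_of_val_eq_add hA hsucc 1 _ _ (by simp; omega))
  induction t with
  | zero => simp
  | succ t ih => simpa [mul_add, add_comm] using pow_add_apply_pos hA hsq ih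

/-- Walk `i → n - 1` along the path, then a closed walk of length `i + j + L` at `n - 1` (the odd
cycle, if needed, plus back-and-forth steps, depending on the parity of `i + j`), then
`n - 1 → j`. -/
theorem pow_apply_pos_of_odd_closed_walk (hn : 2 ≤ n) {L : ℕ} (hL : Odd L) (v : Fin n)
    (hv : (v : ℕ) = n - 1) (hvL : 0 < (A ^ L) v v) (i j : Fin n) :
    0 < (A ^ (2 * (n - 1) + L)) i j := by
  have hloop : 0 < (A ^ (i + j + L : ℕ)) v v := by
    rcases Nat.even_or_odd (i + j) with ⟨t, ht⟩ | hodd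
    · simpa [ht, two_mul, add_comm] using
        pow_add_apply_pos hA hvL (pow_two_mul_apply_self_pos hA hS hsucc hn t v)
    · obtain ⟨t, ht⟩ := hodd.add_odd hL
      simpa [ht, two_mul] using pow_two_mul_apply_self_pos hA hS hsucc hn t v
  have hiv := pow_apply_pos_of_val_eq_add hA hsucc (n - 1 - i) i v (by omega)
  have hvj := pow_apply_pos_of_val_eq_add' hA hS hsucc (n - 1 - j) v j (by omega)
  convert pow_add_apply_pos hA (pow_add_apply_pos hA hiv hloop) hvj using 2
  omega

end PathSupport

end Matrix

def companionOfLastRow (n : ℕ) (s : Finset ℕ) : Matrix (Fin n) (Fin n) ℝ :=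
  Matrix.of fun i j =>
    if (i : ℕ) + 1 < n then (if (j : ℕ) = (i : ℕ) + 1 then 1 else 0)
    else (if (j : ℕ) ∈ s then 1 else 0)

def symmCompanion (n : ℕ) (s : Finset ℕ) : Matrix (Fin n) (Fin n) ℝ :=
  companionOfLastRow n s + (companionOfLastRow n s)ᵀ

section Companion

variable {n : ℕ}

theorem isCompanion_companionOfLastRow (s : Finset ℕ) :
    IsCompanion (companionOfLastRow n s) := by
  intro i j
  by_cases hi : (i : ℕ) + 1 < n
  · simp [companionOfLastRow, hi]
  · by_cases hj : (j : ℕ) ∈ s <;> simp [companionOfLastRow, hi, hj]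

theorem IsCompanion.eq_companionOfLastRow {C : Matrix (Fin n) (Fin n) ℝ} (hC : IsCompanion C)
    (v : Fin n) (hv : (v : ℕ) = n - 1) :
    C = companionOfLastRow n (({j | C v j = 1} : Finset (Fin n)).map Fin.valEmbedding) := by
  ext i j
  have hCij := hC i j
  by_cases hi : (i : ℕ) + 1 < n
  · simpa [companionOfLastRow, hi] using hCij
  · obtain rfl : i = v := Fin.ext (by omega)
    simp only [hi, if_false] at hCij
    rcases hCij with h | h <;> simp [companionOfLastRow, hi, h, Fin.val_inj]

theorem mem_companionClass_zero_zero_iff (hn : 0 < n) (A : Matrix (Fin n) (Fin n) ℝ) :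
    A ∈ companionClass n hn 0 0 ↔ ∃ s ⊆ Ico 1 (n - 1), symmCompanion n s = A := by
  constructor
  · rintro ⟨C, hC, hfirst, hlast, rfl⟩
    refine ⟨_, fun j hj => ?_, congrArg (fun C => C + Cᵀ)
      (IsCompanion.eq_companionOfLastRow hC ⟨n - 1, by omega⟩ rfl).symm⟩
    obtain ⟨j, hj1, rfl⟩ := mem_map.1 hj
    have h0 : j ≠ ⟨0, hn⟩ := by rintro rfl; simp_all
    have h1 : j ≠ ⟨n - 1, by omega⟩ := by rintro rfl; simp_all
    simp only [Fin.valEmbedding_apply, mem_Ico, ne_eq, Fin.ext_iff] at h0 h1 ⊢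
    omega
  · rintro ⟨s, hs, rfl⟩
    have h0 : 0 ∉ s := fun h => by simpa using hs h
    have h1 : n - 1 ∉ s := fun h => by simpa using hs h
    exact ⟨_, isCompanion_companionOfLastRow s, by simp [companionOfLastRow, h0],
      by simp [companionOfLastRow, h1], rfl⟩

theorem symmCompanion_injOn : Set.InjOn (symmCompanion n) {s | s ⊆ range (n - 1)} := by
  intro s hs t ht hst
  ext j
  by_cases hj : j < n - 1
  · have := congrFun₂ hst ⟨n - 1, by omega⟩ ⟨j, by omega⟩
    have hlast : ¬(n - 1 + 1 < n) := by omega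
    have hj1 : j + 1 < n := by omega
    simp only [symmCompanion, companionOfLastRow, Matrix.add_apply, Matrix.transpose_apply,
      Matrix.of_apply, hlast, hj1, if_false, if_true] at this
    by_cases hjs : j ∈ s <;> by_cases hjt : j ∈ t <;> simp_all
  · exact iff_of_false (fun h => hj (mem_range.1 (hs h))) (fun h => hj (mem_range.1 (ht h)))

theorem companionOfLastRow_nonneg (s : Finset ℕ) (i j : Fin n) :
    0 ≤ companionOfLastRow n s i j := by
  simp only [companionOfLastRow, Matrix.of_apply]
  split_ifs <;> norm_num

theorem symmCompanion_nonneg (s : Finset ℕ) (i j : Fin n) : 0 ≤ symmCompanion n s i j :=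
  add_nonneg (companionOfLastRow_nonneg s i j) (companionOfLastRow_nonneg s j i)

theorem symmCompanion_apply_pos_of_val_eq_succ (s : Finset ℕ) (i j : Fin n)
    (h : (j : ℕ) = i + 1) : 0 < symmCompanion n s i j := by
  have hi : (i : ℕ) + 1 < n := h ▸ j.isLt
  have hC : companionOfLastRow n s i j = 1 := by simp [companionOfLastRow, hi, h]
  simpa [symmCompanion, hC] using
    add_pos_of_pos_of_nonneg one_pos (companionOfLastRow_nonneg s j i)

theorem symmCompanion_apply_pos_of_mem (s : Finset ℕ) (v j : Fin n) (hv : (v : ℕ) = n - 1)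
    (hj : (j : ℕ) ∈ s) : 0 < symmCompanion n s v j := by
  have hv' : ¬(v : ℕ) + 1 < n := by omega
  have hC : companionOfLastRow n s v j = 1 := by simp [companionOfLastRow, hv', hj]
  simpa [symmCompanion, hC] using
    add_pos_of_pos_of_nonneg one_pos (companionOfLastRow_nonneg s j v)

/-- Besides the path, the edges are `n - 1 — j` for `j ∈ s`; they join indices of opposite
parity exactly when the cycle `n - 1 → j → j + 1 → ⋯ → n - 1`, of length `n - j`, is even. -/
theorem symmCompanion_apply_eq_zero_of_parity {s : Finset ℕ} (hs : ∀ j ∈ s, ¬Odd (n - j))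
    (i j : Fin n) (h : ((i : ℕ) : ZMod 2) = (j : ℕ)) : symmCompanion n s i j = 0 := by
  rw [ZMod.natCast_eq_natCast_iff'] at h
  have hC : ∀ a b : Fin n, (a : ℕ) % 2 = (b : ℕ) % 2 → companionOfLastRow n s a b = 0 := by
    intro a b hab
    simp only [companionOfLastRow, Matrix.of_apply]
    split_ifs with hlt hsucc hmem
    · omega
    · rfl
    · have := Nat.even_iff.1 (Nat.not_odd_iff_even.1 (hs b hmem))
      omega
    · rfl
  simp [symmCompanion, hC i j h, hC j i h.symm]

theorem isPrimitive_symmCompanion_iff (hn : 2 ≤ n) {s : Finset ℕ} (hs : s ⊆ range n) :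
    IsPrimitive (symmCompanion n s) ↔ ∃ j ∈ s, Odd (n - j) := by
  have hA := symmCompanion_nonneg (n := n) s
  have hS : (symmCompanion n s).IsSymm := Matrix.isSymm_add_transpose_self _
  have hsucc := symmCompanion_apply_pos_of_val_eq_succ (n := n) s
  let v : Fin n := ⟨n - 1, by omega⟩
  constructor
  · rintro ⟨-, k, -, hpos⟩
    by_contra! hparity
    obtain ⟨i, j, hij⟩ := Matrix.exists_pow_apply_eq_zero_of_bipartite
      (fun i : Fin n => ((i : ℕ) : ZMod 2)) (symmCompanion_apply_eq_zero_of_parity hparity)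
      (i₀ := ⟨0, by omega⟩) (i₁ := ⟨1, by omega⟩) (by simp) k
    exact (hpos i j).ne' hij
  · rintro ⟨j, hj, hodd⟩
    have hj' := mem_range.1 (hs hj)
    have hcycle : 0 < (symmCompanion n s ^ (1 + (n - 1 - j))) v v :=
      Matrix.pow_add_apply_pos hA (l := ⟨j, by omega⟩)
        (by simpa using symmCompanion_apply_pos_of_mem s v _ rfl hj)
        (Matrix.pow_apply_pos_of_val_eq_add hA hsucc _ _ _ (by simp [v]; omega))
    rw [show 1 + (n - 1 - j) = n - j by omega] at hcycle
    exact ⟨hA, _, by omega,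
      Matrix.pow_apply_pos_of_odd_closed_walk hA hS hsucc hn hodd v rfl hcycle⟩

end Companion

theorem Finset.card_filter_powerset_exists {α : Type*} [DecidableEq α] (P : Finset α)
    (p : α → Prop) [DecidablePred p] :
    #{s ∈ P.powerset | ∃ j ∈ s, p j} = 2 ^ #P - 2 ^ #{j ∈ P | ¬p j} := by
  have hcompl : {s ∈ P.powerset | ¬∃ j ∈ s, p j} = {j ∈ P | ¬p j}.powerset := by
    ext s
    simp only [mem_filter, mem_powerset, not_exists, not_and, subset_iff]
    grind
  rw [← card_powerset P, ← card_powerset, ← hcompl, ← card_filter_add_card_filter_not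
    (s := P.powerset) (p := fun s => ∃ j ∈ s, p j), Nat.add_sub_cancel]

theorem card_filter_Ico_not_odd_sub (n : ℕ) :
    #{j ∈ Ico 1 (n - 1) | ¬Odd (n - j)} = (n - 1) / 2 := by
  have himage : {j ∈ Ico 1 (n - 1) | ¬Odd (n - j)} =
      (range ((n - 1) / 2)).image (fun t => n - 2 * (t + 1)) := by
    ext j
    simp only [mem_filter, mem_Ico, mem_image, mem_range, Nat.not_odd_iff_even, Nat.even_iff]
    constructor
    · rintro ⟨⟨h1, h2⟩, h3⟩
      exact ⟨(n - j) / 2 - 1, by omega, by omega⟩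
    · rintro ⟨t, ht, rfl⟩
      omega
  rw [himage, card_image_of_injOn (fun a ha b hb h => by simp at ha hb h; omega), card_range]

/-- For `n ≥ 4`, `|PSC_n^{0,0}| = 2^(n-2) - 2^(⌊(n-1)/2⌋)`. -/
theorem card_PSC_zero_zero {n : ℕ} (hn : 4 ≤ n) :
    Set.ncard {A ∈ companionClass n (by omega) 0 0 | IsPrimitive A} =
      2 ^ (n - 2) - 2 ^ ((n - 1) / 2) := by
  have hIco : Ico 1 (n - 1) ⊆ range (n - 1) := fun j hj => mem_range.2 (mem_Ico.1 hj).2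
  have hprim (s : Finset ℕ) (hs : s ⊆ Ico 1 (n - 1)) :
      IsPrimitive (symmCompanion n s) ↔ ∃ j ∈ s, Odd (n - j) :=
    isPrimitive_symmCompanion_iff (by omega)
      (hs.trans (hIco.trans (range_subset_range.2 (n.sub_le 1))))
  have hset : {A ∈ companionClass n (by omega) 0 0 | IsPrimitive A} =
      ↑({s ∈ (Ico 1 (n - 1)).powerset | ∃ j ∈ s, Odd (n - j)}.image (symmCompanion n)) := by
    ext A
    simp only [Set.mem_ofPred_eq, mem_companionClass_zero_zero_iff, coe_image, coe_filter,
      Set.mem_image, mem_powerset]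
    constructor
    · rintro ⟨⟨s, hs, rfl⟩, hA⟩
      exact ⟨s, ⟨hs, (hprim s hs).1 hA⟩, rfl⟩
    · rintro ⟨s, ⟨hs, hodd⟩, rfl⟩
      exact ⟨⟨s, hs, rfl⟩, (hprim s hs).2 hodd⟩
  have hinj : Set.InjOn (symmCompanion n)
      ↑{s ∈ (Ico 1 (n - 1)).powerset | ∃ j ∈ s, Odd (n - j)} :=
    symmCompanion_injOn.mono fun s hs => (mem_powerset.1 (mem_filter.1 hs).1).trans hIco
  rw [hset, Set.ncard_coe_finset, card_image_of_injOn hinj, card_filter_powerset_exists,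
    Nat.card_Ico, card_filter_Ico_not_odd_sub, Nat.sub_sub]
end
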